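/- For every μ > 0 and every ε ≥ 0, the quantity f(μ, ε) = Φ(μ/2 - ε/μ) - e^ε Φ(-μ/2 - ε/μ) satisfies 0 ≤ f(μ, ε) < 1. -/

import Mathlib

noncomputable def stdNormalPDF (x : ℝ) : ℝ :=
  (Real.sqrt (2 * Real.pi))⁻¹ * Real.exp (-x ^ 2 / 2)

noncomputable def stdNormalCDF (x : ℝ) : ℝ := ∫ t in Set.Iic x, stdNormalPDF t

noncomputable def gaussF (μ ε : ℝ) : ℝ :=
  stdNormalCDF (μ / 2 - ε / μ) - Real.exp ε * stdNormalCDF (-μ / 2 - ε / μ)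

/-! Shifting the density by `μ` multiplies it by `exp (-μ t - μ² / 2)`, which is at least `exp ε`
exactly on `t ≤ -μ/2 - ε/μ`. Integrating over that half-line gives
`exp ε * Φ(-μ/2 - ε/μ) ≤ Φ(μ/2 - ε/μ)`, i.e. `0 ≤ f(μ, ε)`; and `f(μ, ε) ≤ Φ(μ/2 - ε/μ) < 1`
because the density is positive on the complementary half-line. -/

open MeasureTheory ProbabilityTheory Real Set

lemma stdNormalPDF_eq_gaussianPDFReal : stdNormalPDF = gaussianPDFReal 0 1 := by
  ext x
  simp [stdNormalPDF, gaussianPDFReal]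

lemma stdNormalPDF_pos (x : ℝ) : 0 < stdNormalPDF x := by
  rw [stdNormalPDF_eq_gaussianPDFReal]
  exact gaussianPDFReal_pos _ _ _ one_ne_zero

lemma integrable_stdNormalPDF : Integrable stdNormalPDF :=
  stdNormalPDF_eq_gaussianPDFReal ▸ integrable_gaussianPDFReal 0 1

lemma integral_stdNormalPDF : ∫ x, stdNormalPDF x = 1 :=
  stdNormalPDF_eq_gaussianPDFReal ▸ integral_gaussianPDFReal_eq_one 0 one_ne_zero

lemma stdNormalCDF_nonneg (x : ℝ) : 0 ≤ stdNormalCDF x :=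
  setIntegral_nonneg measurableSet_Iic fun t _ => (stdNormalPDF_pos t).le

lemma stdNormalCDF_lt_one (x : ℝ) : stdNormalCDF x < 1 := by
  have hint := integrable_stdNormalPDF
  have hsplit : stdNormalCDF x + ∫ t in Ioi x, stdNormalPDF t = 1 := by
    rw [stdNormalCDF, intervalIntegral.integral_Iic_add_Ioi hint.integrableOn
      hint.integrableOn, integral_stdNormalPDF]
  have htail : 0 < ∫ t in Ioi x, stdNormalPDF t := by
    rw [setIntegral_pos_iff_support_of_nonneg_ae
      (ae_of_all _ fun t => (stdNormalPDF_pos t).le) hint.integrableOn,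
      Function.support_eq_univ fun t => (stdNormalPDF_pos t).ne', univ_inter]
    simp
  linarith

lemma setIntegral_Iic_stdNormalPDF_add (b μ : ℝ) :
    ∫ t in Iic b, stdNormalPDF (t + μ) = stdNormalCDF (b + μ) := by
  have hpre : (fun t => t + μ) ⁻¹' Iic (b + μ) = Iic b := by
    ext t
    simp
  rw [stdNormalCDF, ← (measurePreserving_add_right volume μ).setIntegral_preimage_emb
    (MeasurableEquiv.addRight μ).measurableEmbedding stdNormalPDF, hpre]

lemma stdNormalPDF_add (t μ : ℝ) :
    stdNormalPDF (t + μ) = exp (-(μ * t) - μ ^ 2 / 2) * stdNormalPDF t := by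
  rw [stdNormalPDF, stdNormalPDF, mul_left_comm, ← exp_add]
  ring_nf

lemma exp_mul_stdNormalPDF_le_add {μ ε t : ℝ} (hμ : 0 < μ) (ht : t ≤ -μ / 2 - ε / μ) :
    exp ε * stdNormalPDF t ≤ stdNormalPDF (t + μ) := by
  rw [stdNormalPDF_add]
  refine mul_le_mul_of_nonneg_right (exp_le_exp.2 ?_) (stdNormalPDF_pos t).le
  have : μ * t ≤ -μ ^ 2 / 2 - ε := by
    calc μ * t ≤ μ * (-μ / 2 - ε / μ) := by gcongr
      _ = -μ ^ 2 / 2 - ε := by field_simp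
  linarith

lemma exp_mul_stdNormalCDF_le {μ : ℝ} (ε : ℝ) (hμ : 0 < μ) :
    exp ε * stdNormalCDF (-μ / 2 - ε / μ) ≤ stdNormalCDF (μ / 2 - ε / μ) := by
  have hint := integrable_stdNormalPDF
  calc exp ε * stdNormalCDF (-μ / 2 - ε / μ)
      = ∫ t in Iic (-μ / 2 - ε / μ), exp ε * stdNormalPDF t := by
        rw [stdNormalCDF, integral_const_mul]
    _ ≤ ∫ t in Iic (-μ / 2 - ε / μ), stdNormalPDF (t + μ) :=
        setIntegral_mono_on (hint.const_mul _).integrableOn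
          (hint.comp_add_right μ).integrableOn measurableSet_Iic
          fun t ht => exp_mul_stdNormalPDF_le_add hμ ht
    _ = stdNormalCDF (μ / 2 - ε / μ) := by
        rw [setIntegral_Iic_stdNormalPDF_add]
        ring_nf

theorem gaussF_mem_Ico_general (μ ε : ℝ) (hμ : 0 < μ) :
    0 ≤ gaussF μ ε ∧ gaussF μ ε < 1 := by
  have hle := exp_mul_stdNormalCDF_le ε hμ
  have hsub : 0 ≤ exp ε * stdNormalCDF (-μ / 2 - ε / μ) :=
    mul_nonneg (exp_pos ε).le (stdNormalCDF_nonneg _)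
  have hlt := stdNormalCDF_lt_one (μ / 2 - ε / μ)
  constructor <;> unfold gaussF <;> linarith

theorem gaussF_mem_Ico (μ ε : ℝ) (hμ : 0 < μ) (hε : 0 ≤ ε) :
    0 ≤ gaussF μ ε ∧ gaussF μ ε < 1 :=
  gaussF_mem_Ico_general μ ε hμ
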